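/- arXiv:1609.08095 — 5 statements merged into one kernel-verified Lean document; each statement's English description precedes it below -/
import Mathlib

section
/- For every sufficiently large integer c there exists a finite simple graph G = (R,E) and a subset Y ⊆ R such that td(G) ≤ c, |Y| ≥ 2^{c-3}, conf_R(Y) = α(G) - α(G - Y) > 0, and for every proper subset Ȳ ⊊ Y one has conf_R(Ȳ) = α(G) - α(G - Ȳ) = 0. -/
/-!
Take the path `v₁ a₁ … a_{2t} v₂`, a triangle `a_p b_p c_p` on every `a_p`, and the edges
`b_{2i-1} b_{2i}`; let `Y` be the set of the `c_p`. The `2t` triangles together with `v₁` and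
`v₂` cover `G` by `2t + 2` cliques, and `G - Y` is covered by the `2t + 1` edges
`v₁a₁, a₂a₃, …, a_{2t}v₂` and `b_{2i-1}b_{2i}`. For every `q`, the vertices `v₁`, `v₂`, `c_q`
and, for `p ≠ q`, `a_p` or `b_p` (switching at `q` so that no two chosen `a`s are adjacent and
no matched pair of `b`s is chosen) form an independent set of size `2t + 2` meeting `Y` only in
`c_q`. Hence `α(G) = 2t + 2 > α(G - Y)`, while `α(G - Ȳ) = α(G)` for every `Ȳ ⊊ Y`.

For `t = 2^k` the treedepth is at most `k + 4`: the odd `a`s form a ruler tree of depth `k + 1`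
(ancestry read off from 2-adic valuations), and each remaining gadget of five vertices hangs,
with depth `3`, below the odd one of the two spine vertices it touches.
-/

/-- `TreeDepthLE G h` : `G` is a subgraph of the closure of a rooted forest of height
at most `h`, encoded via the strict ancestor relation `r` of the forest. -/
def TreeDepthLE {V : Type*} (G : SimpleGraph V) (h : ℕ) : Prop :=
  ∃ r : V → V → Prop,
    Transitive r ∧ Irreflexive r ∧
    (∀ u v, G.Adj u v → r u v ∨ r v u) ∧
    (∀ a b v, r a v → r b v → a = b ∨ r a b ∨ r b a) ∧
    ∃ d : V → ℕ, (∀ u v, r u v → d u < d v) ∧ ∀ v, d v < h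

/-- The treedepth of a finite simple graph. -/
noncomputable def treedepth {V : Type*} [Fintype V] (G : SimpleGraph V) : ℕ :=
  sInf {h | TreeDepthLE G h}

/-- An independent set of a simple graph. -/
def IsIndepSet' {V : Type*} (G : SimpleGraph V) (s : Finset V) : Prop :=
  ∀ a ∈ s, ∀ b ∈ s, ¬ G.Adj a b

/-- The independence number of a finite simple graph. -/
noncomputable def alpha {V : Type*} [Fintype V] (G : SimpleGraph V) : ℕ :=
  sSup {n | ∃ s : Finset V, IsIndepSet' G s ∧ s.card = n}


/-- `conf G univ Y = α(G) - α(G - Y)` where `G - Y` is the induced subgraph on the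
complement of `Y`. -/
noncomputable def confAll {n : ℕ} (G : SimpleGraph (Fin n)) (Y : Finset (Fin n)) : ℕ :=
  alpha G - alpha (G.induce ((Yᶜ : Finset (Fin n)) : Set (Fin n)))

open Finset

section IndependenceNumber

variable {V : Type*} (G : SimpleGraph V)

lemma alpha_le_card_of_cliqueCover [Fintype V] {β : Type*} (f : V → β) (T : Finset β)
    (hf : ∀ v, f v ∈ T) (hclique : ∀ u v, u ≠ v → f u = f v → G.Adj u v) : alpha G ≤ T.card := by
  refine csSup_le ⟨0, ∅, by simp [IsIndepSet'], rfl⟩ ?_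
  rintro _ ⟨s, hs, rfl⟩
  refine card_le_card_of_injOn f (fun v _ => hf v) fun u hu v hv huv => ?_
  by_contra hne
  exact hs u hu v hv (hclique u v hne huv)

variable {G}

lemma IsIndepSet'.card_le_alpha [Fintype V] {s : Finset V} (hs : IsIndepSet' G s) :
    s.card ≤ alpha G :=
  le_csSup ⟨Fintype.card V, by rintro _ ⟨s, -, rfl⟩; exact s.card_le_univ⟩ ⟨s, hs, rfl⟩

lemma IsIndepSet'.card_le_alpha_induce {s : Finset V} (hs : IsIndepSet' G s) {X : Set V}
    [Fintype X] (hsX : ∀ v ∈ s, v ∈ X) : s.card ≤ alpha (G.induce X) := by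
  classical
  have hsub : IsIndepSet' (G.induce X) (s.subtype (· ∈ X)) := fun a ha b hb =>
    hs a (mem_subtype.1 ha) b (mem_subtype.1 hb)
  calc s.card = (s.subtype (· ∈ X)).card := by rw [card_subtype, filter_true_of_mem hsX]
    _ ≤ alpha (G.induce X) := hsub.card_le_alpha

end IndependenceNumber

section LevelForest

variable {V W : Type*} (lv : V → ℕ) (blk : ℕ → V → W)

/-- `blk i v` stands for the ancestor of `v` at depth `i`. -/
def LevelAncestor (u v : V) : Prop :=
  lv u < lv v ∧ blk (lv u) u = blk (lv u) v

variable {lv blk}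

lemma LevelAncestor.trans
    (hmono : ∀ i j x y, i ≤ j → blk j x = blk j y → blk i x = blk i y) {u v w : V}
    (huv : LevelAncestor lv blk u v) (hvw : LevelAncestor lv blk v w) :
    LevelAncestor lv blk u w :=
  ⟨huv.1.trans hvw.1, huv.2.trans (hmono _ _ v w huv.1.le hvw.2)⟩

lemma LevelAncestor.eq_or_of_common
    (hmono : ∀ i j x y, i ≤ j → blk j x = blk j y → blk i x = blk i y)
    (hinj : ∀ x y, lv x = lv y → blk (lv x) x = blk (lv x) y → x = y) {a b v : V}
    (hav : LevelAncestor lv blk a v) (hbv : LevelAncestor lv blk b v) (hab : lv a ≤ lv b) :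
    a = b ∨ LevelAncestor lv blk a b := by
  have hblk : blk (lv a) a = blk (lv a) b :=
    hav.2.trans (hmono _ _ b v hab hbv.2).symm
  rcases hab.lt_or_eq with hlt | heq
  · exact Or.inr ⟨hlt, hblk⟩
  · exact Or.inl (hinj a b heq hblk)

theorem treeDepthLE_of_levels {G : SimpleGraph V} {h : ℕ}
    (hmono : ∀ i j x y, i ≤ j → blk j x = blk j y → blk i x = blk i y)
    (hinj : ∀ x y, lv x = lv y → blk (lv x) x = blk (lv x) y → x = y)
    (hlt : ∀ v, lv v < h)
    (hadj : ∀ x y, G.Adj x y → LevelAncestor lv blk x y ∨ LevelAncestor lv blk y x) :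
    TreeDepthLE G h := by
  refine ⟨LevelAncestor lv blk, fun u v w => LevelAncestor.trans hmono,
    fun v hv => hv.1.false, hadj, fun a b v hav hbv => ?_, lv, fun _ _ h => h.1, hlt⟩
  rcases le_total (lv a) (lv b) with hab | hba
  · exact (hav.eq_or_of_common hmono hinj hbv hab).imp_right Or.inl
  · rcases hbv.eq_or_of_common hmono hinj hav hba with h | h
    exacts [Or.inl h.symm, Or.inr (Or.inr h)]

end LevelForest

section Ruler

lemma mod_two_pow_padicValNat_succ {m : ℕ} (hm : m ≠ 0) :
    m % 2 ^ (padicValNat 2 m + 1) = 2 ^ padicValNat 2 m := by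
  set e := padicValNat 2 m
  obtain ⟨u, hu⟩ : 2 ^ e ∣ m := pow_padicValNat_dvd
  have hodd : ¬ 2 ∣ u := by
    rintro ⟨w, rfl⟩
    exact pow_succ_padicValNat_not_dvd (p := 2) hm ⟨w, by rw [pow_succ, mul_assoc]; exact hu⟩
  calc m % 2 ^ (e + 1) = 2 ^ e * u % (2 ^ e * 2) := by rw [← hu, pow_succ]
    _ = 2 ^ e := by rw [Nat.mul_mod_mul_left, Nat.two_dvd_ne_zero.1 hodd, mul_one]

lemma padicValNat_le_of_le_pow {p m k : ℕ} (hp : 1 < p) (hm : m ≤ p ^ k) : padicValNat p m ≤ k :=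
  (padicValNat_le_nat_log m).trans ((Nat.log_mono_right hm).trans (Nat.log_pow hp k).le)

lemma eq_of_div_two_pow_padicValNat_succ_eq {m n : ℕ} (hm : m ≠ 0) (hn : n ≠ 0)
    (hν : padicValNat 2 m = padicValNat 2 n)
    (hdiv : m / 2 ^ (padicValNat 2 m + 1) = n / 2 ^ (padicValNat 2 m + 1)) : m = n := by
  rw [← Nat.div_add_mod m (2 ^ (padicValNat 2 m + 1)),
    ← Nat.div_add_mod n (2 ^ (padicValNat 2 m + 1)), hdiv, mod_two_pow_padicValNat_succ hm, hν,
    mod_two_pow_padicValNat_succ hn]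

/-- In the ruler forest on the positive integers, `m` lies above `n` when `ν₂ n < ν₂ m` and
`n / 2 ^ (ν₂ m + 1) = m / 2 ^ (ν₂ m + 1)`; an odd number lies below both of its neighbours. -/
lemma div_two_pow_padicValNat_succ_of_odd_neighbour {P A : ℕ} (hP : P ≠ 0)
    (hA : A = P ∨ A % 2 = 1 ∧ (A = P + 1 ∨ P = A + 1)) :
    A / 2 ^ (padicValNat 2 P + 1) = P / 2 ^ (padicValNat 2 P + 1) := by
  rcases hA with rfl | ⟨hodd, hnb⟩
  · rfl
  have he : 1 ≤ padicValNat 2 P := one_le_padicValNat_of_dvd hP (by omega)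
  have h2e : 2 ≤ 2 ^ padicValNat 2 P := by
    simpa using Nat.pow_le_pow_right two_pos he
  have hP' := Nat.div_add_mod P (2 ^ (padicValNat 2 P + 1))
  rw [mod_two_pow_padicValNat_succ hP] at hP'
  generalize P / 2 ^ (padicValNat 2 P + 1) = q at hP' ⊢
  rw [pow_succ] at hP'
  apply Nat.div_eq_of_lt_le
  · rw [pow_succ, mul_comm]; omega
  · rw [pow_succ, add_mul, one_mul, mul_comm]; omega

end Ruler

section ConflictGraph

/-- Vertex `3m + r` (`m < 2t`) is `a_{m+1}`, `c_{m+1}`, `b_{m+1}` for `r = 0, 1, 2`, vertex `6t`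
is `v₁` and `6t + 1` is `v₂`. The disjuncts are the triangles, the path through the `a`s, the
matching of the `b`s, and the two ends of the path. -/
def ChainEdge (t x y : ℕ) : Prop :=
  y < 6 * t ∧ (x / 3 = y / 3 ∧ x < y ∨ x % 3 = 0 ∧ y = x + 3 ∨ x % 6 = 2 ∧ y = x + 3) ∨
    x = 0 ∧ y = 6 * t ∨ x = 6 * t - 3 ∧ y = 6 * t + 1

def conflictGraph (t : ℕ) : SimpleGraph (Fin (6 * t + 2)) :=
  SimpleGraph.fromRel fun x y => ChainEdge t x y

def conflictSet (t : ℕ) : Finset (Fin (6 * t + 2)) :=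
  univ.filter fun x => x.val < 6 * t ∧ x.val % 3 = 1

def triangleIndex (t x : ℕ) : ℕ := if x < 6 * t then x / 3 else x - 4 * t

/-- The clique `v₁a₁` gets index `0`, `a_{2i}a_{2i+1}` gets `i`, `a_{2t}v₂` gets `t`, and
`b_{2i-1}b_{2i}` gets `t + i`. -/
def pathPairIndex (t x : ℕ) : ℕ :=
  if x = 6 * t then 0 else if x = 6 * t + 1 then t else if x % 3 = 0 then (x + 3) / 6
  else t + 1 + x / 6

/-- The offset of the vertex kept from triangle `m`: `c` for `m = q`, otherwise `b` or `a` by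
parity, with the roles swapped past `q`. -/
def sparedChoice (q m : ℕ) : ℕ :=
  if m = q then 1
  else if m < q then (if m % 2 = 0 then 2 else 0) else (if m % 2 = 0 then 0 else 2)

def sparedSet (t q : ℕ) : Finset (Fin (6 * t + 2)) :=
  univ.filter fun x => 6 * t ≤ x.val ∨ x.val % 3 = sparedChoice q (x.val / 3)

variable {t : ℕ}

@[simp] lemma mem_conflictSet {x : Fin (6 * t + 2)} :
    x ∈ conflictSet t ↔ x.val < 6 * t ∧ x.val % 3 = 1 := by
  simp [conflictSet]

@[simp] lemma mem_sparedSet {q : ℕ} {x : Fin (6 * t + 2)} :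
    x ∈ sparedSet t q ↔ 6 * t ≤ x.val ∨ x.val % 3 = sparedChoice q (x.val / 3) := by
  simp [sparedSet]

lemma conflictGraph_adj {x y : Fin (6 * t + 2)} :
    (conflictGraph t).Adj x y ↔ x ≠ y ∧ (ChainEdge t x y ∨ ChainEdge t y x) :=
  SimpleGraph.fromRel_adj _ _ _

lemma conflictGraph_adj_of_chainEdge {x y : Fin (6 * t + 2)} (hxy : x < y)
    (h : ChainEdge t x y) : (conflictGraph t).Adj x y :=
  conflictGraph_adj.2 ⟨hxy.ne, Or.inl h⟩

lemma chainEdge_of_triangleIndex_eq {x y : ℕ} (hy : y < 6 * t + 2) (hxy : x < y)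
    (h : triangleIndex t x = triangleIndex t y) : ChainEdge t x y := by
  unfold triangleIndex at h; unfold ChainEdge; split_ifs at h <;> omega

lemma chainEdge_of_pathPairIndex_eq {x y : ℕ} (hy : y < 6 * t + 2) (hxy : x < y)
    (hxY : ¬ (x < 6 * t ∧ x % 3 = 1)) (hyY : ¬ (y < 6 * t ∧ y % 3 = 1))
    (h : pathPairIndex t x = pathPairIndex t y) : ChainEdge t x y := by
  unfold pathPairIndex at h; unfold ChainEdge; split_ifs at h <;> omega

lemma alpha_conflictGraph_le : alpha (conflictGraph t) ≤ 2 * t + 2 := by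
  refine (alpha_le_card_of_cliqueCover (conflictGraph t) (fun x => triangleIndex t x)
    (range (2 * t + 2)) (fun x => ?_) fun x y hne hxy => ?_).trans (card_range _).le
  · have := x.2
    simp only [mem_range, triangleIndex]
    split_ifs <;> omega
  · rcases Fin.lt_or_lt_of_ne hne with h | h
    · exact conflictGraph_adj_of_chainEdge h (chainEdge_of_triangleIndex_eq y.2 h hxy)
    · exact (conflictGraph_adj_of_chainEdge h
        (chainEdge_of_triangleIndex_eq x.2 h hxy.symm)).symm

lemma alpha_induce_compl_conflictSet_le :
    alpha ((conflictGraph t).induce (((conflictSet t)ᶜ : Finset (Fin (6 * t + 2))) :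
      Set (Fin (6 * t + 2)))) ≤ 2 * t + 1 := by
  refine (alpha_le_card_of_cliqueCover _ (fun x => pathPairIndex t x.1) (range (2 * t + 1))
    (fun x => ?_) fun x y hne hxy => ?_).trans (card_range _).le
  all_goals
    have hx := x.2
    simp only [coe_compl, Set.mem_compl_iff, mem_coe, mem_conflictSet] at hx
  · have := x.1.2
    simp only [mem_range, pathPairIndex]
    split_ifs <;> omega
  · have hy := y.2
    simp only [coe_compl, Set.mem_compl_iff, mem_coe, mem_conflictSet] at hy
    rw [SimpleGraph.induce_adj]
    rcases Fin.lt_or_lt_of_ne (Subtype.coe_injective.ne hne) with h | h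
    · exact conflictGraph_adj_of_chainEdge h (chainEdge_of_pathPairIndex_eq y.1.2 h hx hy hxy)
    · exact (conflictGraph_adj_of_chainEdge h
        (chainEdge_of_pathPairIndex_eq x.1.2 h hy hx hxy.symm)).symm

lemma isIndepSet'_sparedSet {q : ℕ} (hq : q < 2 * t) :
    IsIndepSet' (conflictGraph t) (sparedSet t q) := by
  intro x hx y hy hadj
  obtain ⟨-, hxy⟩ := conflictGraph_adj.1 hadj
  simp only [mem_sparedSet, sparedChoice] at hx hy
  have := x.2; have := y.2
  unfold ChainEdge at hxy
  split_ifs at hx hy <;> omega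

lemma two_mul_add_two_le_card_sparedSet (q : ℕ) : 2 * t + 2 ≤ (sparedSet t q).card := by
  refine (card_range _).symm.le.trans (card_le_card_of_surjOn (fun x => triangleIndex t x) ?_)
  intro m hm
  simp only [coe_range, Set.mem_Iio] at hm
  have hc : sparedChoice q m < 3 := by unfold sparedChoice; split_ifs <;> omega
  by_cases hmt : m < 2 * t
  · refine ⟨⟨3 * m + sparedChoice q m, by omega⟩, ?_, ?_⟩
    · rw [mem_coe, mem_sparedSet, Fin.val_mk, show (3 * m + sparedChoice q m) / 3 = m by omega]
      omega
    · simp only [triangleIndex]; split_ifs <;> omega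
  · refine ⟨⟨m + 4 * t, by omega⟩, ?_, ?_⟩
    · rw [mem_coe, mem_sparedSet, Fin.val_mk]; omega
    · simp only [triangleIndex]; split_ifs <;> omega

lemma val_eq_of_mem_sparedSet_of_mem_conflictSet {q : ℕ} {x : Fin (6 * t + 2)}
    (hq : x ∈ sparedSet t q) (hY : x ∈ conflictSet t) : x.val = 3 * q + 1 := by
  simp only [mem_sparedSet, mem_conflictSet, sparedChoice] at hq hY
  split_ifs at hq <;> omega

lemma two_mul_le_card_conflictSet : 2 * t ≤ (conflictSet t).card := by
  refine (card_range _).symm.le.trans (card_le_card_of_surjOn (fun x => x.val / 3) ?_)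
  intro m hm
  simp only [coe_range, Set.mem_Iio] at hm
  refine ⟨⟨3 * m + 1, by omega⟩, ?_, by simp only; omega⟩
  rw [mem_coe, mem_conflictSet, Fin.val_mk]
  omega

end ConflictGraph

section EliminationForest

/-- In the elimination forest, `v₁` sits like `c₁` and `v₂` like `c_{2t}`. -/
def treeRep (t x : ℕ) : ℕ := if x = 6 * t then 1 else if x = 6 * t + 1 then 6 * t - 2 else x

def anchor (t i : ℕ) : ℕ := if i % 2 = 0 ∨ i + 1 = t then i + 1 else i + 2

/-- Block `i`, the vertices `6i, …, 6i + 5`, is `a_{2i+1}, c_{2i+1}, b_{2i+1}, a_{2i+2}, c_{2i+2},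
b_{2i+2}`. Its spine vertex `a_{2i+1}` sits at position `i + 1` of the ruler forest on `1, …, t`;
the other five hang below position `anchor t i`, the odd one of `i + 1` and `i + 2` (or `t`). -/
def spinePos (t x : ℕ) : ℕ :=
  if treeRep t x % 6 = 0 then treeRep t x / 6 + 1 else anchor t (treeRep t x / 6)

def localDepth (t x : ℕ) : ℕ :=
  if treeRep t x % 6 = 5 then 0 else if treeRep t x % 6 = 2 ∨ treeRep t x % 6 = 3 then 1 else 2

/-- Names the ancestor at local depth `l - 1`: the root by its block `treeRep t x / 6`, a
depth-one vertex by its triangle `treeRep t x / 3`, a leaf by itself. -/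
def localBlock (t x l : ℕ) : ℕ :=
  if l = 0 then 0 else if l = 1 then treeRep t x / 6 else if l = 2 then treeRep t x / 3 else x

def forestLevel (k t x : ℕ) : ℕ :=
  if treeRep t x % 6 = 0 then k - padicValNat 2 (spinePos t x) else k + 1 + localDepth t x

def forestBlock (k t j x : ℕ) : ℕ × ℕ :=
  (spinePos t x / 2 ^ (k + 1 - j), localBlock t x (j - k))

variable {k t : ℕ}

lemma div_pow_eq_of_le {a b c m n : ℕ} (hmn : m ≤ n) (h : a / c ^ m = b / c ^ m) :
    a / c ^ n = b / c ^ n := by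
  rw [← Nat.add_sub_cancel' hmn, pow_add, ← Nat.div_div_eq_div_mul, ← Nat.div_div_eq_div_mul, h]

lemma localBlock_mono {x y l l' : ℕ} (hl : l ≤ l') (h : localBlock t x l' = localBlock t y l') :
    localBlock t x l = localBlock t y l := by
  by_cases hxy : x = y
  · rw [hxy]
  unfold localBlock at *
  split_ifs at * <;> omega

lemma forestBlock_mono {i j x y : ℕ} (hij : i ≤ j)
    (h : forestBlock k t j x = forestBlock k t j y) :
    forestBlock k t i x = forestBlock k t i y := by
  simp only [forestBlock, Prod.mk.injEq] at *
  exact ⟨div_pow_eq_of_le (by omega) h.1, localBlock_mono (by omega) h.2⟩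

lemma treeRep_cases (t x : ℕ) :
    x ≠ 6 * t ∧ x ≠ 6 * t + 1 ∧ treeRep t x = x ∨ x = 6 * t ∧ treeRep t x = 1 ∨
      x = 6 * t + 1 ∧ treeRep t x = 6 * t - 2 := by
  unfold treeRep; split_ifs <;> omega

lemma spinePos_pos (x : ℕ) : 0 < spinePos t x := by
  unfold spinePos anchor; split_ifs <;> omega

lemma spinePos_le (ht : 0 < t) {x : ℕ} (hx : x < 6 * t + 2) : spinePos t x ≤ t := by
  unfold spinePos anchor treeRep; split_ifs <;> omega

lemma forestLevel_lt (x : ℕ) : forestLevel k t x < k + 4 := by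
  unfold forestLevel localDepth; split_ifs <;> omega

lemma levelAncestor_of_spine {s y : ℕ} (hs : treeRep t s % 6 = 0) (hy : treeRep t y % 6 ≠ 0)
    (hsk : spinePos t s ≤ 2 ^ k)
    (hpos : spinePos t y = spinePos t s ∨
      spinePos t y % 2 = 1 ∧ (spinePos t y = spinePos t s + 1 ∨ spinePos t s = spinePos t y + 1)) :
    LevelAncestor (forestLevel k t) (forestBlock k t) s y := by
  have hν := padicValNat_le_of_le_pow one_lt_two hsk
  simp only [LevelAncestor, forestLevel, forestBlock, if_pos hs, if_neg hy, Prod.mk.injEq]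
  refine ⟨by omega, ?_, by simp [localBlock]⟩
  rw [show k + 1 - (k - padicValNat 2 (spinePos t s)) = padicValNat 2 (spinePos t s) + 1 by omega]
  exact (div_two_pow_padicValNat_succ_of_odd_neighbour (spinePos_pos s).ne' hpos).symm

lemma levelAncestor_of_local {x y : ℕ} (hx : treeRep t x % 6 ≠ 0) (hy : treeRep t y % 6 ≠ 0)
    (hg : treeRep t x / 6 = treeRep t y / 6) (hd : localDepth t x < localDepth t y)
    (hb : localBlock t x (localDepth t x + 1) = localBlock t y (localDepth t x + 1)) :
    LevelAncestor (forestLevel k t) (forestBlock k t) x y := by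
  simp only [LevelAncestor, forestLevel, forestBlock, if_neg hx, if_neg hy, Prod.mk.injEq,
    show k + 1 - (k + 1 + localDepth t x) = 0 by omega,
    show k + 1 + localDepth t x - k = localDepth t x + 1 by omega]
  refine ⟨by omega, by simp only [spinePos, if_neg hx, if_neg hy, hg], hb⟩

/-- The forest inside a block, by offset: `b_{2i+2}` (5) is the root, its children are
`b_{2i+1}` (2) and `a_{2i+2}` (3), and theirs are `c_{2i+1}` (1) and `c_{2i+2}` (4). -/
def LocalAncestorOffset (o o' : ℕ) : Prop :=
  o = 5 ∧ (o' = 1 ∨ o' = 2 ∨ o' = 3 ∨ o' = 4) ∨ o = 2 ∧ o' = 1 ∨ o = 3 ∧ o' = 4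

lemma levelAncestor_of_localAncestorOffset {x y : ℕ} (hg : treeRep t x / 6 = treeRep t y / 6)
    (h : LocalAncestorOffset (treeRep t x % 6) (treeRep t y % 6)) :
    LevelAncestor (forestLevel k t) (forestBlock k t) x y := by
  unfold LocalAncestorOffset at h
  refine levelAncestor_of_local (by omega) (by omega) hg ?_ ?_ <;>
  · simp only [localDepth, localBlock]
    split_ifs <;> first | contradiction | omega

lemma levelAncestor_of_chainEdge (ht : 0 < t) (hk : t ≤ 2 ^ k) {x y : ℕ} (hy : y < 6 * t + 2)
    (h : ChainEdge t x y) :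
    LevelAncestor (forestLevel k t) (forestBlock k t) x y ∨
      LevelAncestor (forestLevel k t) (forestBlock k t) y x := by
  unfold ChainEdge at h
  have hx : x < 6 * t + 2 := by omega
  have hrx := treeRep_cases t x
  have hry := treeRep_cases t y
  by_cases hsx : treeRep t x % 6 = 0
  · refine Or.inl (levelAncestor_of_spine hsx (by omega) ((spinePos_le ht hx).trans hk) ?_)
    simp only [spinePos, anchor, if_pos hsx]
    set rx := treeRep t x; set ry := treeRep t y; clear_value rx ry
    split_ifs <;> omega
  by_cases hsy : treeRep t y % 6 = 0
  · refine Or.inr (levelAncestor_of_spine hsy hsx ((spinePos_le ht hy).trans hk) ?_)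
    simp only [spinePos, anchor, if_pos hsy]
    set rx := treeRep t x; set ry := treeRep t y; clear_value rx ry
    split_ifs <;> omega
  have hg : treeRep t x / 6 = treeRep t y / 6 := by omega
  have hoff : LocalAncestorOffset (treeRep t x % 6) (treeRep t y % 6) ∨
      LocalAncestorOffset (treeRep t y % 6) (treeRep t x % 6) := by
    unfold LocalAncestorOffset; omega
  exact hoff.imp (levelAncestor_of_localAncestorOffset hg)
    (levelAncestor_of_localAncestorOffset hg.symm)

lemma eq_of_localBlock_eq {x y : ℕ} (hd : localDepth t x = localDepth t y)
    (hb : localBlock t x (localDepth t x + 1) = localBlock t y (localDepth t x + 1)) : x = y := by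
  have hrx := treeRep_cases t x
  have hry := treeRep_cases t y
  simp only [localBlock, localDepth] at hd hb
  obtain ⟨rx, hx⟩ : ∃ r, treeRep t x = r := ⟨_, rfl⟩
  obtain ⟨ry, hy⟩ : ∃ r, treeRep t y = r := ⟨_, rfl⟩
  simp only [hx, hy] at *
  split_ifs at hd hb <;> first | contradiction | omega

lemma eq_of_forestBlock_eq (ht : 0 < t) (hk : t ≤ 2 ^ k) {x y : ℕ} (hx : x < 6 * t + 2)
    (hy : y < 6 * t + 2) (hl : forestLevel k t x = forestLevel k t y)
    (hb : forestBlock k t (forestLevel k t x) x = forestBlock k t (forestLevel k t x) y) :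
    x = y := by
  have hνx := padicValNat_le_of_le_pow one_lt_two ((spinePos_le ht hx).trans hk)
  have hνy := padicValNat_le_of_le_pow one_lt_two ((spinePos_le ht hy).trans hk)
  simp only [forestBlock, Prod.mk.injEq] at hb
  by_cases hsx : treeRep t x % 6 = 0 <;> by_cases hsy : treeRep t y % 6 = 0 <;>
    simp only [forestLevel, hsx, hsy, if_true, if_false] at hl hb
  · have hν : padicValNat 2 (spinePos t x) = padicValNat 2 (spinePos t y) := by omega
    rw [show k + 1 - (k - padicValNat 2 (spinePos t x)) = padicValNat 2 (spinePos t x) + 1 by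
      omega] at hb
    have hpos :=
      eq_of_div_two_pow_padicValNat_succ_eq (spinePos_pos x).ne' (spinePos_pos y).ne' hν hb.1
    have hrx := treeRep_cases t x
    have hry := treeRep_cases t y
    simp only [spinePos, hsx, hsy, if_true] at hpos
    omega
  · omega
  · omega
  · rw [show k + 1 + localDepth t x - k = localDepth t x + 1 by omega] at hb
    exact eq_of_localBlock_eq (by omega) hb.2

theorem treeDepthLE_conflictGraph (ht : 0 < t) (hk : t ≤ 2 ^ k) :
    TreeDepthLE (conflictGraph t) (k + 4) := by
  refine treeDepthLE_of_levels (lv := fun x : Fin (6 * t + 2) => forestLevel k t x)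
    (blk := fun j x => forestBlock k t j x) (fun _ _ _ _ => forestBlock_mono)
    (fun x y hl hb => Fin.ext (eq_of_forestBlock_eq ht hk x.2 y.2 hl hb))
    (fun x => forestLevel_lt x) fun x y hxy => ?_
  rcases (conflictGraph_adj.1 hxy).2 with h | h
  · exact levelAncestor_of_chainEdge ht hk y.2 h
  · exact (levelAncestor_of_chainEdge ht hk x.2 h).symm

end EliminationForest

section Conflict

variable {t : ℕ}

lemma confAll_conflictSet_pos (ht : 0 < t) : 0 < confAll (conflictGraph t) (conflictSet t) := by
  have hG := (isIndepSet'_sparedSet (t := t) (q := 0) (by omega)).card_le_alpha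
  have hS := two_mul_add_two_le_card_sparedSet (t := t) 0
  have hGY := alpha_induce_compl_conflictSet_le (t := t)
  unfold confAll
  omega

lemma confAll_eq_zero_of_ssubset_conflictSet {Y : Finset (Fin (6 * t + 2))}
    (hY : Y ⊂ conflictSet t) : confAll (conflictGraph t) Y = 0 := by
  obtain ⟨y, hy, hyY⟩ := exists_of_ssubset hY
  have hy' := mem_conflictSet.1 hy
  have hsub : ∀ x ∈ sparedSet t (y.val / 3), x ∈ ((Yᶜ : Finset (Fin (6 * t + 2))) :
      Set (Fin (6 * t + 2))) := by
    intro x hx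
    rw [mem_coe, mem_compl]
    intro hxY
    have hxy : x = y :=
      Fin.ext (by have := val_eq_of_mem_sparedSet_of_mem_conflictSet hx (hY.subset hxY); omega)
    exact hyY (hxy ▸ hxY)
  have hGY := (isIndepSet'_sparedSet (by omega)).card_le_alpha_induce hsub
  have hS := two_mul_add_two_le_card_sparedSet (t := t) (y.val / 3)
  have hG := alpha_conflictGraph_le (t := t)
  unfold confAll
  omega

end Conflict

/-- For every sufficiently large `c` there is a graph `G` of treedepth at most `c`
and a set `Y` of at least `2^(c-3)` vertices with positive conflict, all of whose
proper subsets have zero conflict. -/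
theorem exists_graph_large_minimal_conflict :
    ∃ lambda : ℕ, ∀ c ≥ lambda, ∃ (n : ℕ) (G : SimpleGraph (Fin n)) (Y : Finset (Fin n)),
      treedepth G ≤ c ∧
      2 ^ (c - 3) ≤ Y.card ∧
      0 < confAll G Y ∧
      ∀ Yb : Finset (Fin n), Yb ⊂ Y → confAll G Yb = 0 := by
  refine ⟨4, fun c hc => ⟨_, conflictGraph (2 ^ (c - 4)), conflictSet (2 ^ (c - 4)), ?_, ?_,
    confAll_conflictSet_pos (by positivity), fun _ => confAll_eq_zero_of_ssubset_conflictSet⟩⟩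
  · calc treedepth _ ≤ c - 4 + 4 :=
          Nat.sInf_le (treeDepthLE_conflictGraph (by positivity) le_rfl)
      _ = c := by omega
  · calc 2 ^ (c - 3) = 2 * 2 ^ (c - 4) := by rw [← pow_succ']; congr 1; omega
      _ ≤ _ := two_mul_le_card_conflictSet
end

section
/- Rule-2 safeness for annotated independent set: let G = (V, E, H) be a hypergraph with V = X ⊎ R, where E consists of ordinary edges (each within R or between X and R) and H is a set of hyperedges contained in X, and let X' ⊆ X satisfy conf_R(X') = α(G[R]) - α(G[R \ N_R(X')]) > |X|. Then for every integer k, G has an independent set of size at least k if and only if the hypergraph G¹ obtained from G by adding X' as a new hyperedge has an independent set of size at least k. (An independent set in such a hypergraph is a vertex set containing no edge of E and no hyperedge of H.) -/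
/-- An independent set of the hypergraph whose ordinary edges are those of `G` and
whose hyperedges are the members of `H`: a vertex set containing no edge and no
hyperedge. -/
def HyperIndep {V : Type*} (G : SimpleGraph V) (H : Finset (Finset V))
    (S : Finset V) : Prop :=
  (∀ u v, G.Adj u v → ¬(u ∈ S ∧ v ∈ S)) ∧ ∀ h ∈ H, ¬ h ⊆ S

/-- `N_R(X')`: the vertices of `R` adjacent in `G` to some vertex of `X'`. -/
def nbhdIn {V : Type*} [DecidableEq V] (G : SimpleGraph V) [DecidableRel G.Adj]
    (R X' : Finset V) : Finset V :=
  R.filter fun v => ∃ x ∈ X', G.Adj x v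

lemma alpha_bdd {W : Type*} [Fintype W] (G : SimpleGraph W) :
    BddAbove {n | ∃ s : Finset W, IsIndepSet' G s ∧ s.card = n} := by
  refine ⟨Fintype.card W, ?_⟩
  rintro n ⟨s, -, rfl⟩
  exact s.card_le_univ

lemma alpha_exists {W : Type*} [Fintype W] (G : SimpleGraph W) :
    ∃ s : Finset W, IsIndepSet' G s ∧ s.card = alpha G := by
  have h0 : (0:ℕ) ∈ {n | ∃ s : Finset W, IsIndepSet' G s ∧ s.card = n} :=
    ⟨∅, by simp [IsIndepSet'], rfl⟩
  exact Nat.sSup_mem ⟨0, h0⟩ (alpha_bdd G)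

lemma le_alpha {V : Type*} [Fintype V] (G : SimpleGraph V) (s : Set V) [Fintype s]
    (t : Finset V) (ht : ∀ x ∈ t, x ∈ s) (hind : ∀ a ∈ t, ∀ b ∈ t, ¬ G.Adj a b) :
    t.card ≤ alpha (G.induce s) := by
  apply le_csSup (alpha_bdd _)
  refine ⟨t.attach.map ⟨fun x => ⟨x.1, ht x.1 x.2⟩, ?_⟩, ?_, ?_⟩
  · intro a b h
    have h2 := congrArg Subtype.val h
    exact Subtype.ext h2
  · rintro a ha b hb hadj
    simp only [Finset.mem_map, Finset.mem_attach, true_and] at ha hb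
    obtain ⟨a', -, rfl⟩ := ha
    obtain ⟨b', -, rfl⟩ := hb
    exact hind a' a'.2 b' b'.2 hadj
  · simp

/-- Rule-2 safeness: if `X' ⊆ X` satisfies `conf_R(X') > |X|`, then adding `X'` as a
new hyperedge yields an equivalent instance of the annotated independent set
problem. Here `V = X ⊎ R` with `R = Xᶜ`, every edge of `G` has an endpoint in `R`,
and every hyperedge of `H` is contained in `X`. -/
theorem rule2_safe {V : Type*} [Fintype V] [DecidableEq V] (G : SimpleGraph V)
    [DecidableRel G.Adj] (X : Finset V) (H : Finset (Finset V))
    (hedges : ∀ u v, G.Adj u v → u ∉ X ∨ v ∉ X)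
    (hH : ∀ h ∈ H, h ⊆ X)
    (X' : Finset V) (hX' : X' ⊆ X)
    (hconf : X.card <
      alpha (G.induce ((Xᶜ : Finset V) : Set V)) -
        alpha (G.induce ((Xᶜ \ nbhdIn G Xᶜ X' : Finset V) : Set V)))
    (k : ℕ) :
    (∃ S : Finset V, HyperIndep G H S ∧ k ≤ S.card) ↔
    (∃ S : Finset V, HyperIndep G (insert X' H) S ∧ k ≤ S.card) := by
  constructor
  · rintro ⟨S, ⟨hSe, hSh⟩, hk⟩
    by_cases hXS : X' ⊆ S
    · -- replace S by a maximum independent set of G[R]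
      have hX'ne : X'.Nonempty := by
        rcases X'.eq_empty_or_nonempty with rfl | h
        · exfalso
          have h1 : nbhdIn G Xᶜ (∅ : Finset V) = ∅ := by
            simp [nbhdIn]
          rw [h1, Finset.sdiff_empty] at hconf
          omega
        · exact h
      obtain ⟨T0, hT0ind, hT0card⟩ := alpha_exists (G.induce ((Xᶜ : Finset V) : Set V))
      set T : Finset V := T0.map ⟨Subtype.val, Subtype.val_injective⟩ with hTdef
      have hTR : ∀ v ∈ T, v ∉ X := by
        intro v hv
        simp only [hTdef, Finset.mem_map, Function.Embedding.coeFn_mk] at hv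
        obtain ⟨⟨v', hv'⟩, -, rfl⟩ := hv
        simpa using hv'
      have hTind : ∀ a ∈ T, ∀ b ∈ T, ¬ G.Adj a b := by
        intro a ha b hb hab
        simp only [hTdef, Finset.mem_map, Function.Embedding.coeFn_mk] at ha hb
        obtain ⟨a', ha', rfl⟩ := ha
        obtain ⟨b', hb', rfl⟩ := hb
        exact hT0ind a' ha' b' hb' hab
      have hHe : ∅ ∉ H := fun h0 => hSh ∅ h0 (Finset.empty_subset S)
      refine ⟨T, ⟨fun u v huv hm => hTind u hm.1 v hm.2 huv, ?_⟩, ?_⟩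
      · intro h hh hsub
        have hhX : h ⊆ X := by
          rcases Finset.mem_insert.mp hh with rfl | hh'
          · exact hX'
          · exact hH h hh'
        have hhe : h = ∅ := by
          rcases h.eq_empty_or_nonempty with rfl | ⟨x, hx⟩
          · rfl
          · exact absurd (hhX hx) (hTR x (hsub hx))
        subst hhe
        rcases Finset.mem_insert.mp hh with h1 | h1
        · exact hX'ne.ne_empty h1.symm
        · exact hHe h1
      · -- cardinality
        have hsplit : (S ∩ X).card + (S \ X).card = S.card :=
          Finset.card_inter_add_card_sdiff S X
        have h1 : (S ∩ X).card ≤ X.card :=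
          Finset.card_le_card (Finset.inter_subset_right)
        have h2 : (S \ X).card ≤
            alpha (G.induce ((Xᶜ \ nbhdIn G Xᶜ X' : Finset V) : Set V)) := by
          apply le_alpha
          · intro v hv
            have hvS : v ∈ S := (Finset.mem_sdiff.mp hv).1
            have hvX : v ∉ X := (Finset.mem_sdiff.mp hv).2
            simp only [Finset.coe_sdiff, Set.mem_diff, Finset.mem_coe,
              Finset.mem_compl]
            refine ⟨hvX, ?_⟩
            intro hvN
            obtain ⟨x, hxX', hxv⟩ := (Finset.mem_filter.mp hvN).2
            exact hSe x v hxv ⟨hXS hxX', hvS⟩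
          · intro a ha b hb hab
            exact hSe a b hab ⟨(Finset.mem_sdiff.mp ha).1, (Finset.mem_sdiff.mp hb).1⟩
        have hTcard : T.card = alpha (G.induce ((Xᶜ : Finset V) : Set V)) := by
          simp [hTdef, hT0card]
        omega
    · exact ⟨S, ⟨hSe, fun h hh => by
        rcases Finset.mem_insert.mp hh with rfl | hh'
        · exact hXS
        · exact hSh h hh'⟩, hk⟩
  · rintro ⟨S, ⟨hSe, hSh⟩, hk⟩
    exact ⟨S, ⟨hSe, fun h hh => hSh h (Finset.mem_insert_of_mem hh)⟩, hk⟩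
end

section
/- Hyperedge-removal gadget correctness: let X = {v_1,...,v_n} and H a family of m nonempty subsets of X; construct the simple graph G' as follows. For each i ∈ [n] add vertices y_i^a, y_i^b, z_i with edges {z_i, y_i^a}, {z_i, y_i^b}. For each H ∈ H, H = {v_{H_1},...,v_{H_{|H|}}}, add |H| independent sets W_H^1, ..., W_H^{|H|} of size n each, make their union a complete |H|-partite graph, and for each ℓ join every vertex of W_H^ℓ to both y_{H_ℓ}^a and y_{H_ℓ}^b. Then for every k, the hypergraph (X, H) has an independent set of size at least k (a set S ⊆ X containing no member of H) if and only if G' has an independent set of size at least n + k + n·m. -/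
/-- The part-`W` vertices of the hyperedge-removal gadget: a triple consisting of a
hyperedge `h ∈ H`, an element `v ∈ h` (selecting the part `W_h^v`), and a copy
index in `Fin n` (each part has `n` vertices). -/
def GadgetW (n : ℕ) (H : Finset (Finset (Fin n))) : Type :=
  {q : Finset (Fin n) × Fin n × Fin n // q.1 ∈ H ∧ q.2.1 ∈ q.1}

instance (n : ℕ) (H : Finset (Finset (Fin n))) : Fintype (GadgetW n H) :=
  Subtype.fintype _

/-- The hyperedge-removal gadget graph `G'`: for each `i` a triangle-free gadget
`y_i^a = (i,0)`, `y_i^b = (i,1)`, `z_i = (i,2)` with `z_i` adjacent to `y_i^a, y_i^b`;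
for each hyperedge `h ∈ H` a complete `|h|`-partite graph on the parts
`W_h^v` (`v ∈ h`), each of size `n`; and every vertex of `W_h^v` joined to both
`y_v^a` and `y_v^b`. -/
def gadgetGraph (n : ℕ) (H : Finset (Finset (Fin n))) :
    SimpleGraph ((Fin n × Fin 3) ⊕ GadgetW n H) :=
  SimpleGraph.fromRel fun x y =>
    (∃ i : Fin n, x = Sum.inl (i, 2) ∧ (y = Sum.inl (i, 0) ∨ y = Sum.inl (i, 1))) ∨
    (∃ q q' : GadgetW n H, x = Sum.inr q ∧ y = Sum.inr q' ∧
      q.1.1 = q'.1.1 ∧ q.1.2.1 ≠ q'.1.2.1) ∨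
    (∃ (q : GadgetW n H) (s : Fin 3), s ≠ 2 ∧ x = Sum.inl (q.1.2.1, s) ∧ y = Sum.inr q)

open Finset in
/-- Hyperedge-removal gadget correctness: the hypergraph `(X, H)` on `n` vertices
(with nonempty hyperedges) has an independent set of size at least `k` iff the
gadget graph `G'` has an independent set of size at least `n + k + n·m`,
where `m = |H|`. -/
theorem gadgetGraph_correct (n : ℕ) (H : Finset (Finset (Fin n)))
    (hne : ∀ h ∈ H, h.Nonempty) (k : ℕ) :
    (∃ S : Finset (Fin n), (∀ h ∈ H, ¬ h ⊆ S) ∧ k ≤ S.card) ↔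
    (∃ S' : Finset ((Fin n × Fin 3) ⊕ GadgetW n H),
      (∀ a ∈ S', ∀ b ∈ S', ¬ (gadgetGraph n H).Adj a b) ∧
      n + k + n * H.card ≤ S'.card) := by
  classical
  constructor
  · rintro ⟨S, hS, hk⟩
    have hSn : S.card ≤ n := by simpa using S.card_le_univ
    have hsub : ∀ h ∈ H, (h \ S).Nonempty := by
      intro h hh
      obtain ⟨v, hv, hvs⟩ := Finset.not_subset.mp (hS h hh)
      exact ⟨v, Finset.mem_sdiff.mpr ⟨hv, hvs⟩⟩
    set Sa : Finset ((Fin n × Fin 3) ⊕ GadgetW n H) :=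
      (S ×ˢ ({0, 1} : Finset (Fin 3))).image Sum.inl with hSa
    set Sb : Finset ((Fin n × Fin 3) ⊕ GadgetW n H) :=
      (Sᶜ ×ˢ ({2} : Finset (Fin 3))).image Sum.inl with hSb
    set Sc : Finset ((Fin n × Fin 3) ⊕ GadgetW n H) :=
      (H.attach ×ˢ (univ : Finset (Fin n))).image
        (fun p => Sum.inr ⟨(p.1.1, (p.1.1 \ S).min' (hsub p.1.1 p.1.2), p.2),
          p.1.2, (Finset.mem_sdiff.mp (Finset.min'_mem _ (hsub p.1.1 p.1.2))).1⟩) with hSc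
    -- membership descriptions
    have hmemA : ∀ x ∈ Sa, ∃ i s, x = Sum.inl (i, s) ∧ i ∈ S ∧ (s = 0 ∨ s = 1) := by
      intro x hx
      simp only [hSa, Finset.mem_image, Finset.mem_product, Finset.mem_insert,
        Finset.mem_singleton] at hx
      obtain ⟨⟨i, s⟩, ⟨hi, hs⟩, rfl⟩ := hx
      exact ⟨i, s, rfl, hi, hs⟩
    have hmemB : ∀ x ∈ Sb, ∃ i, x = Sum.inl (i, 2) ∧ i ∉ S := by
      intro x hx
      simp only [hSb, Finset.mem_image, Finset.mem_product, Finset.mem_singleton,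
        Finset.mem_compl] at hx
      obtain ⟨⟨i, s⟩, ⟨hi, rfl⟩, rfl⟩ := hx
      exact ⟨i, rfl, hi⟩
    have hmemC : ∀ x ∈ Sc, ∃ q : GadgetW n H, x = Sum.inr q ∧
        (q.1.1 \ S).min = ↑q.1.2.1 := by
      intro x hx
      simp only [hSc, Finset.mem_image] at hx
      obtain ⟨p, -, rfl⟩ := hx
      refine ⟨_, rfl, ?_⟩
      exact (Finset.coe_min' (hsub p.1.1 p.1.2)).symm
    refine ⟨Sa ∪ Sb ∪ Sc, ?_, ?_⟩
    · -- independence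
      have key : ∀ a ∈ Sa ∪ Sb ∪ Sc, ∀ b ∈ Sa ∪ Sb ∪ Sc,
          ¬ ((∃ i : Fin n, a = Sum.inl (i, 2) ∧
              (b = Sum.inl (i, 0) ∨ b = Sum.inl (i, 1))) ∨
            (∃ q q' : GadgetW n H, a = Sum.inr q ∧ b = Sum.inr q' ∧
              q.1.1 = q'.1.1 ∧ q.1.2.1 ≠ q'.1.2.1) ∨
            (∃ (q : GadgetW n H) (s : Fin 3), s ≠ 2 ∧
              a = Sum.inl (q.1.2.1, s) ∧ b = Sum.inr q)) := by
        intro a ha b hb hrel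
        have hdesc : ∀ x ∈ Sa ∪ Sb ∪ Sc,
            (∃ i s, x = Sum.inl (i, s) ∧ i ∈ S ∧ (s = 0 ∨ s = 1)) ∨
            (∃ i, x = Sum.inl (i, 2) ∧ i ∉ S) ∨
            (∃ q : GadgetW n H, x = Sum.inr q ∧ (q.1.1 \ S).min = ↑q.1.2.1) := by
          intro x hx
          rcases Finset.mem_union.mp hx with hx | hx
          · rcases Finset.mem_union.mp hx with hx | hx
            · exact Or.inl (hmemA x hx)
            · exact Or.inr (Or.inl (hmemB x hx))
          · exact Or.inr (Or.inr (hmemC x hx))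
        rcases hrel with ⟨i, rfl, hb'⟩ | ⟨q, q', rfl, rfl, hqq, hvv⟩ | ⟨q, s, hs2, rfl, rfl⟩
        · -- z_i vs y_i : a = inl (i,2) so i ∉ S ; b = y so i ∈ S
          have hia : i ∉ S := by
            rcases hdesc _ ha with ⟨i', s', he, -, hs'⟩ | ⟨i', he, hi'⟩ | ⟨q, he, -⟩
            · simp only [Sum.inl.injEq, Prod.mk.injEq] at he
              rcases hs' with rfl | rfl <;> simp at he
            · simp only [Sum.inl.injEq, Prod.mk.injEq] at he
              exact he.1 ▸ hi'
            · exact absurd he (by simp)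
          have hib : i ∈ S := by
            rcases hdesc _ hb with ⟨i', s', he, hi', -⟩ | ⟨i', he, -⟩ | ⟨q, he, -⟩
            · rcases hb' with rfl | rfl <;>
                · simp only [Sum.inl.injEq, Prod.mk.injEq] at he
                  exact he.1 ▸ hi'
            · rcases hb' with rfl | rfl <;>
                · simp only [Sum.inl.injEq, Prod.mk.injEq] at he
                  simp at he
            · rcases hb' with rfl | rfl <;> exact absurd he (by simp)
          exact hia hib
        · -- two W vertices in the same hyperedge
          have h1 : (q.1.1 \ S).min = ↑q.1.2.1 := by
            rcases hdesc _ ha with ⟨i', s', he, -, -⟩ | ⟨i', he, -⟩ | ⟨q0, he, hm⟩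
            · exact absurd he (by simp)
            · exact absurd he (by simp)
            · rw [Sum.inr.injEq] at he; exact he ▸ hm
          have h2 : (q'.1.1 \ S).min = ↑q'.1.2.1 := by
            rcases hdesc _ hb with ⟨i', s', he, -, -⟩ | ⟨i', he, -⟩ | ⟨q0, he, hm⟩
            · exact absurd he (by simp)
            · exact absurd he (by simp)
            · rw [Sum.inr.injEq] at he; exact he ▸ hm
          apply hvv
          have : ((q.1.2.1 : Fin n) : WithTop (Fin n)) = ↑q'.1.2.1 := by
            rw [← h1, ← h2, hqq]
          exact_mod_cast this
        · -- y vertex of v adjacent to W vertex of part v : v ∈ S and v ∉ S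
          have hva : q.1.2.1 ∈ S := by
            rcases hdesc _ ha with ⟨i', s', he, hi', -⟩ | ⟨i', he, -⟩ | ⟨q0, he, -⟩
            · simp only [Sum.inl.injEq, Prod.mk.injEq] at he
              exact he.1 ▸ hi'
            · simp only [Sum.inl.injEq, Prod.mk.injEq] at he
              exact absurd he.2 hs2
            · exact absurd he (by simp)
          have hvb : q.1.2.1 ∉ S := by
            rcases hdesc _ hb with ⟨i', s', he, -, -⟩ | ⟨i', he, -⟩ | ⟨q0, he, hm⟩
            · exact absurd he (by simp)
            · exact absurd he (by simp)
            · rw [Sum.inr.injEq] at he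
              subst he
              exact (Finset.mem_sdiff.mp (Finset.mem_of_min hm)).2
          exact hvb hva
      intro a ha b hb hadj
      rw [gadgetGraph, SimpleGraph.fromRel_adj] at hadj
      rcases hadj.2 with h | h
      · exact key a ha b hb h
      · exact key b hb a ha h
    · -- cardinality
      have dAB : Disjoint Sa Sb := by
        rw [Finset.disjoint_left]
        intro x hxa hxb
        obtain ⟨i, s, he1, -, hs⟩ := hmemA x hxa
        obtain ⟨i', he2, -⟩ := hmemB x hxb
        rw [he1] at he2
        simp only [Sum.inl.injEq, Prod.mk.injEq] at he2
        rcases hs with rfl | rfl <;> exact absurd he2.2 (by decide)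
      have dABC : Disjoint (Sa ∪ Sb) Sc := by
        rw [Finset.disjoint_left]
        intro x hxab hxc
        obtain ⟨q, he0, -⟩ := hmemC x hxc
        rcases Finset.mem_union.mp hxab with hx | hx
        · obtain ⟨i, s, he, -⟩ := hmemA _ hx; rw [he0] at he; simp at he
        · obtain ⟨i, he, -⟩ := hmemB _ hx; rw [he0] at he; simp at he
      have cA : Sa.card = S.card * 2 := by
        rw [hSa, Finset.card_image_of_injective _ Sum.inl_injective,
          Finset.card_product]
        rfl
      have cB : Sb.card + S.card = n := by
        rw [hSb, Finset.card_image_of_injective _ Sum.inl_injective,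
          Finset.card_product, Finset.card_singleton, Nat.mul_one, Nat.add_comm]
        simp [S.card_add_card_compl]
      have cC : Sc.card = H.card * n := by
        have hinj : Set.InjOn (fun p : {x // x ∈ H} × Fin n =>
            (Sum.inr ⟨(p.1.1, (p.1.1 \ S).min' (hsub p.1.1 p.1.2), p.2),
              p.1.2, (Finset.mem_sdiff.mp (Finset.min'_mem _ (hsub p.1.1 p.1.2))).1⟩ :
              (Fin n × Fin 3) ⊕ GadgetW n H)) ↑(H.attach ×ˢ (univ : Finset (Fin n))) := by
          rintro ⟨⟨h1v, hh1⟩, j1⟩ - ⟨⟨h2v, hh2⟩, j2⟩ - he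
          simp only [Sum.inr.injEq] at he
          have he2 := congrArg (fun q : GadgetW n H => q.1) (Sum.inr_injective he)
          simp only [Prod.mk.injEq] at he2
          obtain ⟨e1, -, e3⟩ := he2
          subst e1; subst e3; rfl
        rw [hSc, Finset.card_image_of_injOn hinj, Finset.card_product,
          Finset.card_attach, Finset.card_univ, Fintype.card_fin]
      have ctot : (Sa ∪ Sb ∪ Sc).card = Sa.card + Sb.card + Sc.card := by
        rw [Finset.card_union_of_disjoint dABC, Finset.card_union_of_disjoint dAB]
      rw [ctot, cA, cC]
      have : n * H.card = H.card * n := Nat.mul_comm _ _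
      rw [this]
      linarith [hk, cB]
  · rintro ⟨S', hS', hcard⟩
    rcases Nat.eq_zero_or_pos k with rfl | hk1
    · refine ⟨∅, fun h hh hsub => ?_, Nat.zero_le _⟩
      exact (hne h hh).ne_empty (Finset.subset_empty.mp hsub)
    set T : Finset (Fin n) :=
      univ.filter (fun i => Sum.inl (i, 0) ∈ S' ∧ Sum.inl (i, 1) ∈ S') with hT
    have hTn : T.card ≤ n := by simpa using T.card_le_univ
    -- adjacency helper
    have adj_of_rel : ∀ a b, a ≠ b →
        ((∃ i : Fin n, a = Sum.inl (i, 2) ∧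
            (b = Sum.inl (i, 0) ∨ b = Sum.inl (i, 1))) ∨
          (∃ q q' : GadgetW n H, a = Sum.inr q ∧ b = Sum.inr q' ∧
            q.1.1 = q'.1.1 ∧ q.1.2.1 ≠ q'.1.2.1) ∨
          (∃ (q : GadgetW n H) (s : Fin 3), s ≠ 2 ∧
            a = Sum.inl (q.1.2.1, s) ∧ b = Sum.inr q)) →
        (gadgetGraph n H).Adj a b := by
      intro a b hab hr
      rw [gadgetGraph, SimpleGraph.fromRel_adj]
      exact ⟨hab, Or.inl hr⟩
    -- split S' into the inl and inr parts
    set A : Finset ((Fin n × Fin 3) ⊕ GadgetW n H) := S'.filter (fun x => x.isLeft) with hA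
    set B : Finset ((Fin n × Fin 3) ⊕ GadgetW n H) :=
      S'.filter (fun x => ¬ x.isLeft) with hB
    have hsplit : A.card + B.card = S'.card :=
      Finset.card_filter_add_card_filter_not _
    -- bound on A
    have hAcard : A.card ≤ n + T.card := by
      have := Finset.card_eq_sum_card_fiberwise
        (f := fun x : (Fin n × Fin 3) ⊕ GadgetW n H =>
          Sum.elim (fun p => p.1) (fun q => q.1.2.1) x)
        (s := A) (t := univ) (fun x _ => Finset.mem_univ _)
      rw [this]
      have hfib : ∀ i : Fin n,
          (A.filter (fun x => Sum.elim (fun p => p.1)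
            (fun q : GadgetW n H => q.1.2.1) x = i)).card
            ≤ if i ∈ T then 2 else 1 := by
        intro i
        have hmem : ∀ x ∈ A.filter (fun x => Sum.elim (fun p => p.1)
            (fun q : GadgetW n H => q.1.2.1) x = i),
            x ∈ S' ∧ ∃ s : Fin 3, x = Sum.inl (i, s) := by
          intro x hx
          rw [Finset.mem_filter] at hx
          obtain ⟨hx1, hx2⟩ := hx
          rw [hA, Finset.mem_filter] at hx1
          obtain ⟨hxS, hxl⟩ := hx1
          match x, hxl with
          | Sum.inl (j, s), _ =>
            simp only [Sum.elim_inl] at hx2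
            exact ⟨hxS, s, by rw [hx2]⟩
        by_cases hi : i ∈ T
        · simp only [hi, if_true]
          have hz : (Sum.inl (i, 2) : (Fin n × Fin 3) ⊕ GadgetW n H) ∉ S' := by
            intro hz
            rw [hT, Finset.mem_filter] at hi
            exact hS' _ hz _ hi.2.1
              (adj_of_rel _ _ (by simp) (Or.inl ⟨i, rfl, Or.inl rfl⟩)) 
          have hsub2 : A.filter (fun x => Sum.elim (fun p => p.1)
              (fun q : GadgetW n H => q.1.2.1) x = i) ⊆
              ({Sum.inl (i, 0), Sum.inl (i, 1)} :
                Finset ((Fin n × Fin 3) ⊕ GadgetW n H)) := by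
            intro x hx
            obtain ⟨hxS, s, rfl⟩ := hmem x hx
            have hs : s = 0 ∨ s = 1 ∨ s = 2 := by omega
            rcases hs with rfl | rfl | rfl
            · simp
            · simp
            · exact absurd hxS hz
          calc _ ≤ ({Sum.inl (i, 0), Sum.inl (i, 1)} :
                Finset ((Fin n × Fin 3) ⊕ GadgetW n H)).card :=
              Finset.card_le_card hsub2
            _ ≤ 2 := (Finset.card_insert_le _ _).trans (by simp)
        · simp only [hi, if_false]
          rw [Finset.card_le_one]
          intro x hx y hy
          obtain ⟨hxS, s, rfl⟩ := hmem x hx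
          obtain ⟨hyS, s', rfl⟩ := hmem y hy
          have hTi : ¬ (Sum.inl (i, 0) ∈ S' ∧ Sum.inl (i, 1) ∈ S') := by
            intro hc
            exact hi (by rw [hT, Finset.mem_filter]; exact ⟨Finset.mem_univ _, hc⟩)
          have noz : ∀ s0 : Fin 3, (s0 = 0 ∨ s0 = 1) →
              Sum.inl (i, s0) ∈ S' → Sum.inl (i, 2) ∈ S' → False := by
            intro s0 hs0 h1 h2
            exact hS' _ h2 _ h1 (adj_of_rel _ _ (by rcases hs0 with rfl | rfl <;> simp)
              (Or.inl ⟨i, rfl, by rcases hs0 with rfl | rfl; exacts [Or.inl rfl, Or.inr rfl]⟩))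
          have hs : s = 0 ∨ s = 1 ∨ s = 2 := by omega
          have hs' : s' = 0 ∨ s' = 1 ∨ s' = 2 := by omega
          rcases hs with rfl | rfl | rfl <;> rcases hs' with rfl | rfl | rfl
          · rfl
          · exact absurd ⟨hxS, hyS⟩ hTi
          · exact absurd (noz 0 (Or.inl rfl) hxS hyS) not_false
          · exact absurd ⟨hyS, hxS⟩ hTi
          · rfl
          · exact absurd (noz 1 (Or.inr rfl) hxS hyS) not_false
          · exact absurd (noz 0 (Or.inl rfl) hyS hxS) not_false
          · exact absurd (noz 1 (Or.inr rfl) hyS hxS) not_false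
          · rfl
      calc ∑ i : Fin n, (A.filter (fun x => Sum.elim (fun p => p.1)
              (fun q : GadgetW n H => q.1.2.1) x = i)).card
          ≤ ∑ i : Fin n, (if i ∈ T then 2 else 1) := Finset.sum_le_sum (fun i _ => hfib i)
        _ = n + T.card := by
            rw [Finset.sum_ite, Finset.sum_const, Finset.sum_const]
            simp only [smul_eq_mul, Nat.mul_one]
            have h1 : (univ.filter (fun i => i ∈ T)).card = T.card := by
              congr 1; ext i; simp
            have h2 : (univ.filter (fun i => ¬ i ∈ T)).card = n - T.card := by
              rw [Finset.filter_not, Finset.filter_mem_eq_inter, Finset.univ_inter,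
                Finset.card_sdiff_of_subset (Finset.subset_univ _)]
              simp
            rw [h1, h2]
            omega
    -- fibers of B
    have hBsum : B.card = ∑ h ∈ H, (B.filter (fun x => Sum.elim (fun _ => (∅ : Finset (Fin n)))
        (fun q : GadgetW n H => q.1.1) x = h)).card := by
      apply Finset.card_eq_sum_card_fiberwise
      intro x hx
      rw [hB, Finset.mem_coe, Finset.mem_filter] at hx
      obtain ⟨-, hxr⟩ := hx
      match x, hxr with
      | Sum.inr q, _ => exact q.2.1
    have hBmem : ∀ h, ∀ x ∈ B.filter (fun x => Sum.elim (fun _ => (∅ : Finset (Fin n)))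
        (fun q : GadgetW n H => q.1.1) x = h),
        x ∈ S' ∧ ∃ q : GadgetW n H, x = Sum.inr q ∧ q.1.1 = h := by
      intro h x hx
      rw [Finset.mem_filter] at hx
      obtain ⟨hx1, hx2⟩ := hx
      rw [hB, Finset.mem_filter] at hx1
      obtain ⟨hxS, hxr⟩ := hx1
      match x, hxr with
      | Sum.inr q, _ =>
        simp only [Sum.elim_inr] at hx2
        exact ⟨hxS, q, rfl, hx2⟩
    have hfibB : ∀ h ∈ H, (B.filter (fun x => Sum.elim (fun _ => (∅ : Finset (Fin n)))
        (fun q : GadgetW n H => q.1.1) x = h)).card ≤ n := by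
      intro h hh
      set fib := B.filter (fun x => Sum.elim (fun _ => (∅ : Finset (Fin n)))
        (fun q : GadgetW n H => q.1.1) x = h) with hfib
      rcases fib.eq_empty_or_nonempty with he | ⟨x0, hx0⟩
      · rw [he]; simp
      obtain ⟨hx0S, q0, rfl, hq0⟩ := hBmem h x0 hx0
      have hsamev : ∀ x ∈ fib, ∃ q : GadgetW n H, x = Sum.inr q ∧ q.1.1 = h ∧
          q.1.2.1 = q0.1.2.1 := by
        intro x hx
        obtain ⟨hxS, q, rfl, hq⟩ := hBmem h x hx
        refine ⟨q, rfl, hq, ?_⟩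
        by_contra hv
        exact hS' _ hxS _ hx0S (adj_of_rel _ _ (by simp [Sum.inr.injEq]; intro hc; subst hc; exact hv rfl)
          (Or.inr (Or.inl ⟨q, q0, rfl, rfl, hq.trans hq0.symm, hv⟩)))
      have : fib.card ≤ (univ : Finset (Fin n)).card := by
        apply Finset.card_le_card_of_injOn
          (fun x => Sum.elim (fun p => p.1) (fun q : GadgetW n H => q.1.2.2) x)
        · intro x _; exact Finset.mem_univ _
        · intro x hx y hy he
          obtain ⟨q, rfl, hq1, hq2⟩ := hsamev x hx
          obtain ⟨q', rfl, hq1', hq2'⟩ := hsamev y hy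
          simp only [Sum.elim_inr] at he
          have e1 : q.1.1 = q'.1.1 := hq1.trans hq1'.symm
          have e2 : q.1.2.1 = q'.1.2.1 := hq2.trans hq2'.symm
          exact congrArg Sum.inr (Subtype.ext (Prod.ext_iff.mpr
            ⟨e1, Prod.ext_iff.mpr ⟨e2, he⟩⟩))
      simpa using this
    -- key: if h ⊆ T then the fiber of h is empty
    have hfibT : ∀ h ∈ H, h ⊆ T → (B.filter (fun x => Sum.elim (fun _ => (∅ : Finset (Fin n)))
        (fun q : GadgetW n H => q.1.1) x = h)) = ∅ := by
      intro h hh hsub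
      rw [Finset.eq_empty_iff_forall_notMem]
      intro x hx
      obtain ⟨hxS, q, rfl, hq⟩ := hBmem h x hx
      have hv : q.1.2.1 ∈ T := hsub (hq ▸ q.2.2)
      rw [hT, Finset.mem_filter] at hv
      exact hS' _ hv.2.1 _ hxS
        (adj_of_rel _ _ (by simp) (Or.inr (Or.inr ⟨q, 0, by decide, rfl, rfl⟩)))
    -- no hyperedge is contained in T
    by_cases hbad : ∃ h0 ∈ H, h0 ⊆ T
    · exfalso
      obtain ⟨h0, hh0, hsub0⟩ := hbad
      have he0 : H.card = (H.erase h0).card + 1 := (Finset.card_erase_add_one hh0).symm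
      have hB0 : B.card ≤ (H.erase h0).card * n := by
        rw [hBsum, ← Finset.add_sum_erase _ _ hh0, hfibT h0 hh0 hsub0]
        simp only [Finset.card_empty, Nat.zero_add]
        have := Finset.sum_le_card_nsmul (H.erase h0)
          (fun h => (B.filter (fun x => Sum.elim (fun _ => (∅ : Finset (Fin n)))
            (fun q : GadgetW n H => q.1.1) x = h)).card) n
          (fun h hhm => hfibB h (Finset.mem_of_mem_erase hhm))
        simpa using this
      rw [he0, Nat.mul_add, Nat.mul_one] at hcard
      have hmc : (H.erase h0).card * n = n * (H.erase h0).card := Nat.mul_comm _ _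
      rw [hmc] at hB0
      linarith [hsplit, hAcard, hTn]
    · push_neg at hbad
      refine ⟨T, hbad, ?_⟩
      have hBn : B.card ≤ H.card * n := by
        rw [hBsum]
        have := Finset.sum_le_card_nsmul H
          (fun h => (B.filter (fun x => Sum.elim (fun _ => (∅ : Finset (Fin n)))
            (fun q : GadgetW n H => q.1.1) x = h)).card) n hfibB
        simpa using this
      have hmc : H.card * n = n * H.card := Nat.mul_comm _ _
      rw [hmc] at hBn
      linarith [hsplit, hAcard]
end

section
/- Let G = (U, W, E) be a bipartite graph and G' the graph obtained from G by, for each edge {u,v} ∈ E, adding a new vertex x_{uv} adjacent to both u and v. Then for every integer k, G has a vertex cover of size at most k if and only if G' has a feedback vertex set of size at most k. (This in fact holds for every simple graph G, not only bipartite.) -/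
/-!
Deleting a vertex cover `S` of `G` from `G'` leaves only edges between an old vertex and an
edge vertex `x_e`, and each `x_e` keeps at most one neighbour, since both endpoints of `e`
surviving would make `e` uncovered. A graph in which every edge has an endpoint of degree at
most one has no cycle. Conversely, every feedback vertex set `F` of `G'` meets each triangle
`u, v, x_uv`; sending each `x_e ∈ F` to an endpoint of `e` turns `F` into a vertex cover of `G`
that is no larger.
-/

open Sum

/-- A vertex cover of a simple graph. -/
def IsVertexCover {V : Type*} (G : SimpleGraph V) (S : Finset V) : Prop :=
  ∀ u v, G.Adj u v → u ∈ S ∨ v ∈ S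

/-- The graph `G'` obtained from `G` by adding, for each edge `{u,v}` of `G`, a new
vertex adjacent to both `u` and `v`. -/
def edgeGadget {V : Type*} (G : SimpleGraph V) : SimpleGraph (V ⊕ G.edgeSet) :=
  SimpleGraph.fromRel fun x y =>
    (∃ a b, x = Sum.inl a ∧ y = Sum.inl b ∧ G.Adj a b) ∨
    (∃ (a : V) (e : G.edgeSet), a ∈ (e : Sym2 V) ∧ x = Sum.inl a ∧ y = Sum.inr e)

namespace SimpleGraph
variable {W : Type*} {H : SimpleGraph W}

lemma Walk.IsCycle.not_subsingleton_neighborSet {u : W} {p : H.Walk u u} (hp : p.IsCycle) :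
    ¬ (H.neighborSet u).Subsingleton := fun h =>
  hp.snd_ne_penultimate <| h (p.adj_snd hp.not_nil) (p.adj_penultimate hp.not_nil).symm

lemma isAcyclic_of_forall_adj_subsingleton_neighborSet
    (h : ∀ ⦃u v⦄, H.Adj u v → (H.neighborSet u).Subsingleton ∨ (H.neighborSet v).Subsingleton) :
    H.IsAcyclic := by
  classical
  intro u p hp
  have hsnd : p.snd ∈ p.support :=
    p.snd_mem_support_of_mem_edges (p.mk_start_snd_mem_edges hp.not_nil)
  rcases h (p.adj_snd hp.not_nil) with hsub | hsub
  · exact hp.not_subsingleton_neighborSet hsub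
  · exact (hp.rotate hsnd).not_subsingleton_neighborSet hsub

lemma not_isAcyclic_of_adj_of_adj_of_adj {u v w : W} (huv : H.Adj u v) (hvw : H.Adj v w)
    (hwu : H.Adj w u) : ¬ H.IsAcyclic := fun hH => by
  classical
  exact hH.cliqueFree le_rfl {u, v, w} (is3Clique_triple_iff.mpr ⟨huv, hwu.symm, hvw⟩)

end SimpleGraph

section edgeGadget
variable {V : Type*} {G : SimpleGraph V}

@[simp]
lemma edgeGadget_adj_inl_inl {a b : V} : (edgeGadget G).Adj (inl a) (inl b) ↔ G.Adj a b :=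
  ⟨fun h => (by simpa [edgeGadget, G.adj_comm b a] using h : a ≠ b ∧ G.Adj a b).2,
    fun h => by simp [edgeGadget, h, h.ne]⟩

@[simp]
lemma edgeGadget_adj_inl_inr {a : V} {e : G.edgeSet} :
    (edgeGadget G).Adj (inl a) (inr e) ↔ a ∈ (e : Sym2 V) := by
  simp [edgeGadget]

@[simp]
lemma edgeGadget_adj_inr_inl {a : V} {e : G.edgeSet} :
    (edgeGadget G).Adj (inr e) (inl a) ↔ a ∈ (e : Sym2 V) := by
  rw [SimpleGraph.adj_comm, edgeGadget_adj_inl_inr]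

@[simp]
lemma edgeGadget_not_adj_inr_inr {e f : G.edgeSet} : ¬ (edgeGadget G).Adj (inr e) (inr f) := by
  simp [edgeGadget]

lemma IsVertexCover.eq_of_mem_of_mem {S : Finset V} (hS : IsVertexCover G S) {e : G.edgeSet}
    {a b : V} (ha : a ∈ (e : Sym2 V)) (hb : b ∈ (e : Sym2 V)) (haS : a ∉ S) (hbS : b ∉ S) :
    a = b := by
  by_contra hab
  have hadj : G.Adj a b := by
    rw [← SimpleGraph.mem_edgeSet, ← (Sym2.mem_and_mem_iff hab).mp ⟨ha, hb⟩]
    exact e.2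
  exact (hS a b hadj).elim haS hbS

lemma IsVertexCover.subsingleton_neighborSet_induce_edgeGadget_inr {S : Finset V}
    (hS : IsVertexCover G S) (e : G.edgeSet) (he : inr e ∉ S.map .inl) :
    (((edgeGadget G).induce {x | x ∉ S.map .inl}).neighborSet ⟨inr e, he⟩).Subsingleton := by
  rintro ⟨a | _, ha⟩ hea ⟨b | _, hb⟩ heb
  · have hab := hS.eq_of_mem_of_mem (by simpa using hea) (by simpa using heb)
      (by simpa using ha) (by simpa using hb)
    simp [hab]
  all_goals simp at hea heb

lemma IsVertexCover.isAcyclic_induce_edgeGadget {S : Finset V} (hS : IsVertexCover G S) :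
    ((edgeGadget G).induce {x | x ∉ S.map .inl}).IsAcyclic := by
  refine SimpleGraph.isAcyclic_of_forall_adj_subsingleton_neighborSet ?_
  rintro ⟨a | e, ha⟩ ⟨b | f, hb⟩ hab
  · have ha : a ∉ S := by simpa using ha
    have hb : b ∉ S := by simpa using hb
    exact ((hS a b (by simpa using hab)).elim ha hb).elim
  · exact .inr (hS.subsingleton_neighborSet_induce_edgeGadget_inr f hb)
  · exact .inl (hS.subsingleton_neighborSet_induce_edgeGadget_inr e ha)
  · simp at hab

noncomputable def edgeGadgetToVertex : V ⊕ G.edgeSet → V :=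
  Sum.elim id fun e => (e : Sym2 V).out.1

lemma isVertexCover_image_edgeGadgetToVertex [DecidableEq V] {F : Finset (V ⊕ G.edgeSet)}
    (hF : ((edgeGadget G).induce {x | x ∉ F}).IsAcyclic) :
    IsVertexCover G (F.image edgeGadgetToVertex) := by
  intro u v huv
  by_contra! ⟨hu, hv⟩
  let e : G.edgeSet := ⟨s(u, v), huv⟩
  have hu' : inl u ∉ F := fun h => hu (Finset.mem_image_of_mem _ h)
  have hv' : inl v ∉ F := fun h => hv (Finset.mem_image_of_mem _ h)
  have he' : inr e ∉ F := by
    intro h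
    have hmem := Finset.mem_image_of_mem edgeGadgetToVertex h
    rcases Sym2.mem_iff.mp (Sym2.out_fst_mem (e : Sym2 V)) with h' | h'
    · exact hu (h' ▸ hmem)
    · exact hv (h' ▸ hmem)
  refine SimpleGraph.not_isAcyclic_of_adj_of_adj_of_adj (u := ⟨inl u, hu'⟩) (v := ⟨inl v, hv'⟩)
    (w := ⟨inr e, he'⟩) ?_ ?_ ?_ hF <;> simp [e, huv]

end edgeGadget

theorem vertexCover_iff_feedbackVertexSet_general {V : Type*} (G : SimpleGraph V) (k : ℕ) :
    (∃ S : Finset V, IsVertexCover G S ∧ S.card ≤ k) ↔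
    (∃ S : Finset (V ⊕ G.edgeSet),
      ((edgeGadget G).induce {x | x ∉ S}).IsAcyclic ∧ S.card ≤ k) := by
  classical
  constructor
  · rintro ⟨S, hS, hk⟩
    exact ⟨S.map .inl, hS.isAcyclic_induce_edgeGadget, (S.card_map _).trans_le hk⟩
  · rintro ⟨F, hF, hk⟩
    exact ⟨F.image edgeGadgetToVertex, isVertexCover_image_edgeGadgetToVertex hF,
      Finset.card_image_le.trans hk⟩

/-- `G` has a vertex cover of size at most `k` iff `G'` (obtained by adding a new
vertex adjacent to both endpoints of each edge) has a feedback vertex set of size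
at most `k`: a set whose removal leaves an acyclic graph. -/
theorem vertexCover_iff_feedbackVertexSet {V : Type*} [Fintype V] [DecidableEq V]
    (G : SimpleGraph V) [DecidableRel G.Adj] (k : ℕ) :
    (∃ S : Finset V, IsVertexCover G S ∧ S.card ≤ k) ↔
    (∃ S : Finset (V ⊕ G.edgeSet),
      ((edgeGadget G).induce {x | x ∉ S}).IsAcyclic ∧ S.card ≤ k) :=
  vertexCover_iff_feedbackVertexSet_general G k
end

section
/- Pendant-vertex reduction from Independent Set to Induced Matching: let G be a finite simple graph and let G' be obtained by attaching one new pendant vertex v' to each vertex v of G. Then for every integer k, G has an independent set of size at least k if and only if G' has an induced matching of size at least k. -/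
/-- An induced matching: a set `M` of edges of `H` such that no two distinct edges
of `M` share an endpoint and no edge of `H` joins endpoints of two distinct edges
of `M`. -/
def IsInducedMatching {V : Type*} (H : SimpleGraph V) (M : Finset (Sym2 V)) : Prop :=
  (∀ e ∈ M, e ∈ H.edgeSet) ∧
  ∀ e ∈ M, ∀ f ∈ M, e ≠ f → ∀ u ∈ e, ∀ v ∈ f, u ≠ v ∧ ¬ H.Adj u v

/-- The graph obtained from `G` by attaching one new pendant vertex `Sum.inr v` to
each vertex `Sum.inl v`. -/
def addOnePendantEach {V : Type*} (G : SimpleGraph V) : SimpleGraph (V ⊕ V) :=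
  SimpleGraph.fromRel fun x y =>
    (∃ a b, x = Sum.inl a ∧ y = Sum.inl b ∧ G.Adj a b) ∨
    (∃ a, x = Sum.inl a ∧ y = Sum.inr a)

lemma adj_pendant {V : Type*} (G : SimpleGraph V) (x y : V ⊕ V) :
    (addOnePendantEach G).Adj x y ↔
      (∃ a b, x = Sum.inl a ∧ y = Sum.inl b ∧ G.Adj a b) ∨
      (∃ a, x = Sum.inl a ∧ y = Sum.inr a) ∨
      (∃ a, x = Sum.inr a ∧ y = Sum.inl a) := by
  simp only [addOnePendantEach, SimpleGraph.fromRel_adj]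
  constructor
  · rintro ⟨hne, h | h⟩
    · rcases h with ⟨a, b, rfl, rfl, hab⟩ | ⟨a, rfl, rfl⟩
      · exact Or.inl ⟨a, b, rfl, rfl, hab⟩
      · exact Or.inr (Or.inl ⟨a, rfl, rfl⟩)
    · rcases h with ⟨a, b, rfl, rfl, hab⟩ | ⟨a, rfl, rfl⟩
      · exact Or.inl ⟨b, a, rfl, rfl, hab.symm⟩
      · exact Or.inr (Or.inr ⟨a, rfl, rfl⟩)
  · rintro (⟨a, b, rfl, rfl, hab⟩ | ⟨a, rfl, rfl⟩ | ⟨a, rfl, rfl⟩)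
    · exact ⟨by simp [hab.ne], Or.inl (Or.inl ⟨a, b, rfl, rfl, hab⟩)⟩
    · exact ⟨by simp, Or.inl (Or.inr ⟨a, rfl, rfl⟩)⟩
    · exact ⟨by simp, Or.inr (Or.inr ⟨a, rfl, rfl⟩)⟩

/-- `G` has an independent set of size at least `k` iff the graph obtained by
attaching one pendant vertex to each vertex of `G` has an induced matching of size
at least `k`. -/
theorem indepSet_iff_inducedMatching {V : Type*} [Fintype V] [DecidableEq V]
    (G : SimpleGraph V) (k : ℕ) :
    (∃ I : Finset V, IsIndepSet' G I ∧ k ≤ I.card) ↔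
    (∃ M : Finset (Sym2 (V ⊕ V)), IsInducedMatching (addOnePendantEach G) M ∧
      k ≤ M.card) := by
  constructor
  · rintro ⟨I, hI, hk⟩
    refine ⟨I.image (fun a => s(Sum.inl a, Sum.inr a)), ⟨?_, ?_⟩, ?_⟩
    · intro e he
      simp only [Finset.mem_image] at he
      obtain ⟨a, _, rfl⟩ := he
      rw [SimpleGraph.mem_edgeSet, adj_pendant]
      exact Or.inr (Or.inl ⟨a, rfl, rfl⟩)
    · intro e he f hf hef u hu v hv
      simp only [Finset.mem_image] at he hf
      obtain ⟨a, ha, rfl⟩ := he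
      obtain ⟨b, hb, rfl⟩ := hf
      have hab : a ≠ b := by rintro rfl; exact hef rfl
      rw [Sym2.mem_iff] at hu hv
      rcases hu with rfl | rfl <;> rcases hv with rfl | rfl <;>
        refine ⟨by simp [hab], ?_⟩ <;> rw [adj_pendant] <;>
        rintro (⟨c, d, hc, hd, hcd⟩ | ⟨c, hc, hd⟩ | ⟨c, hc, hd⟩) <;>
        simp_all <;> first
          | (subst hc; subst hd; exact hI a ha b hb hcd)
          | (exact hab (hc.trans hd.symm))
          | skip
    · calc k ≤ I.card := hk
        _ = _ := (Finset.card_image_of_injective _ (fun a b h => by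
            simpa using Sym2.eq_iff.mp h |>.elim (fun h => h.1) (fun h => by simp at h))).symm
  · rintro ⟨M, ⟨hM1, hM2⟩, hk⟩
    rcases Nat.eq_zero_or_pos k with rfl | hkpos
    · exact ⟨∅, fun a ha => absurd ha (by simp), by simp⟩
    have hMne : M.Nonempty := Finset.card_pos.mp (lt_of_lt_of_le hkpos hk)
    obtain ⟨e0, he0⟩ := hMne
    have hinl : ∀ e ∈ M, ∃ a, Sum.inl a ∈ e := by
      intro e he
      have := hM1 e he
      induction e using Sym2.inductionOn with
      | hf x y =>
        rw [SimpleGraph.mem_edgeSet, adj_pendant] at this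
        rcases this with ⟨a, b, rfl, rfl, _⟩ | ⟨a, rfl, rfl⟩ | ⟨a, rfl, rfl⟩
        · exact ⟨a, by simp⟩
        · exact ⟨a, by simp⟩
        · exact ⟨a, by simp⟩
    have hV : Nonempty V := ⟨(hinl e0 he0).choose⟩
    set ch : Sym2 (V ⊕ V) → V := fun e =>
      if h : ∃ a, Sum.inl a ∈ e then h.choose else Classical.arbitrary V with hch
    have hchmem : ∀ e ∈ M, Sum.inl (ch e) ∈ e := by
      intro e he
      have h := hinl e he
      simp only [hch, dif_pos h]
      exact h.choose_spec
    refine ⟨M.image ch, ?_, ?_⟩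
    · intro a ha b hb hab
      simp only [Finset.mem_image] at ha hb
      obtain ⟨e, he, rfl⟩ := ha
      obtain ⟨f, hf, rfl⟩ := hb
      have hef : e ≠ f := by
        rintro rfl
        exact hab.ne rfl
      have := hM2 e he f hf hef _ (hchmem e he) _ (hchmem f hf)
      exact this.2 ((adj_pendant G _ _).mpr (Or.inl ⟨_, _, rfl, rfl, hab⟩))
    · calc k ≤ M.card := hk
        _ = (M.image ch).card := (Finset.card_image_of_injOn (fun e he f hf h => by
            by_contra hef
            exact (hM2 e he f hf hef _ (hchmem e he) _ (hchmem f hf)).1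
              (by rw [h]))).symm
end
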